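/- Typability from DF2 to 4Dfun (adding trails): if Γ ⊢_DF2 e : τ ⟨σ_α⟩ α ⟨σ_β⟩ β, then the translated environment satisfies Γ⁺ ⊢_4Dfun e : τ⁺ ⟨•_μ, σ_α⁺⟩ α⁺ ⟨•_μ, σ_β⁺⟩ β⁺, where the translation ⁺ inserts the empty trail type •_μ at every function and continuation type. -/
import Mathlib


namespace DF2FD

/- Source language: λ-calculus with numbers and shift/reset. -/
inductive Tm : Type
  | var : ℕ → Tm
  | num : ℕ → Tm
  | lam : Tm → Tm
  | app : Tm → Tm → Tm
  | shift : Tm → Tm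
  | reset : Tm → Tm

/- Danvy–Filinski (1CPS) types: nat, or (τ1 → τ2, α, β). -/
inductive DTy : Type
  | nat : DTy
  | arr : DTy → DTy → DTy → DTy → DTy

/-- Danvy–Filinski's type system: Γ ⊢ e : τ, α, β. -/
inductive DHasTy : List DTy → Tm → DTy → DTy → DTy → Prop
  | var {Γ : List DTy} {x : ℕ} {τ α : DTy} : Γ[x]? = some τ → DHasTy Γ (.var x) τ α α
  | num {Γ : List DTy} {n : ℕ} {α : DTy} : DHasTy Γ (.num n) .nat α α
  | lam {Γ : List DTy} {e : Tm} {τ1 τ2 α β γ : DTy} :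
      DHasTy (τ1 :: Γ) e τ2 α β → DHasTy Γ (.lam e) (.arr τ1 τ2 α β) γ γ
  | app {Γ : List DTy} {e1 e2 : Tm} {τ1 τ2 α β γ δ : DTy} :
      DHasTy Γ e1 (.arr τ1 τ2 α β) γ δ → DHasTy Γ e2 τ1 β γ →
      DHasTy Γ (.app e1 e2) τ2 α δ
  | shift {Γ : List DTy} {e : Tm} {τ α δ ς β : DTy} :
      DHasTy ((.arr τ α δ δ) :: Γ) e ς ς β → DHasTy Γ (.shift e) τ α β
  | reset {Γ : List DTy} {e : Tm} {ς τ α : DTy} :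
      DHasTy Γ e ς ς τ → DHasTy Γ (.reset e) τ α α

/- DF2 (2CPS) types: nat, or (τ1 → τ2) ⟨σα⟩ α ⟨σβ⟩ β, with functional
   meta-continuation types. -/
mutual
inductive D2Ty : Type
  | nat : D2Ty
  | arr : D2Ty → D2Ty → M2 → D2Ty → M2 → D2Ty → D2Ty
inductive M2 : Type
  | empty : M2
  | fn : D2Ty → D2Ty → M2
end

/-- The DF2 type system derived from the 2CPS interpreter:
    Γ ⊢ e : τ ⟨σα⟩ α ⟨σβ⟩ β. -/
inductive D2HasTy : List D2Ty → Tm → D2Ty → M2 → D2Ty → M2 → D2Ty → Prop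
  | var {Γ : List D2Ty} {x : ℕ} {τ : D2Ty} {σ : M2} {α : D2Ty} :
      Γ[x]? = some τ → D2HasTy Γ (.var x) τ σ α σ α
  | num {Γ : List D2Ty} {n : ℕ} {σ : M2} {α : D2Ty} : D2HasTy Γ (.num n) .nat σ α σ α
  | lam {Γ : List D2Ty} {e : Tm} {τ1 τ2 : D2Ty} {σα : M2} {a : D2Ty} {σβ : M2} {b : D2Ty}
      {σ : M2} {γ : D2Ty} :
      D2HasTy (τ1 :: Γ) e τ2 σα a σβ b →
      D2HasTy Γ (.lam e) (.arr τ1 τ2 σα a σβ b) σ γ σ γ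
  | app {Γ : List D2Ty} {e1 e2 : Tm} {τ1 τ2 : D2Ty} {σα : M2} {a : D2Ty} {σβ : M2} {b : D2Ty}
      {σγ : M2} {γ : D2Ty} {σδ : M2} {δ : D2Ty} :
      D2HasTy Γ e1 (.arr τ1 τ2 σα a σβ b) σγ γ σδ δ →
      D2HasTy Γ e2 τ1 σβ b σγ γ →
      D2HasTy Γ (.app e1 e2) τ2 σα a σδ δ
  | reset {Γ : List D2Ty} {e : Tm} {γ γ' τ : D2Ty} {σ : M2} {α β : D2Ty} :
      D2HasTy Γ e γ (.fn γ γ') γ' (.fn τ α) β →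
      D2HasTy Γ (.reset e) τ σ α σ β
  | shift {Γ : List D2Ty} {e : Tm} {τ τ1 : D2Ty} {σ1 : M2} {τ2 α γ γ' : D2Ty} {σβ : M2}
      {β : D2Ty} :
      D2HasTy ((.arr τ τ1 σ1 τ2 σ1 α) :: Γ) e γ (.fn γ γ') γ' σβ β →
      D2HasTy Γ (.shift e) τ (.fn τ1 τ2) α σβ β

/- 4Dfun types: (τ1 → τ2) ⟨μα, σα⟩ α ⟨μβ, σβ⟩ β with trail types and
   functional meta-continuation types. -/
mutual
inductive FTy : Type
  | nat : FTy
  | arr : FTy → FTy → FTr → FM → FTy → FTr → FM → FTy → FTy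
inductive FTr : Type
  | empty : FTr
  | tr : FTy → FTr → FM → FTy → FTr
inductive FM : Type
  | empty : FM
  | fn : FTy → FTy → FM
end

/-- The id-cont-type constraint for 4Dfun's initial continuation. -/
inductive IdContTypeF : FTy → FTr → FM → FTy → Prop
  | idEmpty (γ : FTy) : IdContTypeF γ .empty .empty γ
  | idTrail (γ : FTy) (σ : FM) (γ' : FTy) : IdContTypeF γ (.tr γ .empty σ γ') σ γ'
  | idMeta (γ γ' : FTy) : IdContTypeF γ .empty (.fn γ γ') γ'

/-- The 4Dfun type system (shift/reset fragment):
    Γ ⊢ e : τ ⟨μα, σα⟩ α ⟨μβ, σβ⟩ β. -/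
inductive FHasTy : List FTy → Tm → FTy → FTr → FM → FTy → FTr → FM → FTy → Prop
  | var {Γ : List FTy} {x : ℕ} {τ : FTy} {μ : FTr} {σ : FM} {α : FTy} :
      Γ[x]? = some τ → FHasTy Γ (.var x) τ μ σ α μ σ α
  | num {Γ : List FTy} {n : ℕ} {μ : FTr} {σ : FM} {α : FTy} :
      FHasTy Γ (.num n) .nat μ σ α μ σ α
  | lam {Γ : List FTy} {e : Tm} {τ1 τ2 : FTy} {μα : FTr} {σα : FM} {a : FTy} {μβ : FTr}
      {σβ : FM} {b : FTy} {μ : FTr} {σ : FM} {γ : FTy} :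
      FHasTy (τ1 :: Γ) e τ2 μα σα a μβ σβ b →
      FHasTy Γ (.lam e) (.arr τ1 τ2 μα σα a μβ σβ b) μ σ γ μ σ γ
  | app {Γ : List FTy} {e1 e2 : Tm} {τ1 τ2 : FTy} {μα : FTr} {σα : FM} {a : FTy} {μβ : FTr}
      {σβ : FM} {b : FTy} {μγ : FTr} {σγ : FM} {γ : FTy} {μδ : FTr} {σδ : FM} {δ : FTy} :
      FHasTy Γ e1 (.arr τ1 τ2 μα σα a μβ σβ b) μγ σγ γ μδ σδ δ →
      FHasTy Γ e2 τ1 μβ σβ b μγ σγ γ →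
      FHasTy Γ (.app e1 e2) τ2 μα σα a μδ σδ δ
  | reset {Γ : List FTy} {e : Tm} {γ : FTy} {μid : FTr} {σid : FM} {γ' τ : FTy} {σα : FM}
      {α β : FTy} :
      IdContTypeF γ μid σid γ' →
      FHasTy Γ e γ μid σid γ' .empty (.fn τ α) β →
      FHasTy Γ (.reset e) τ .empty σα α .empty σα β
  | shift {Γ : List FTy} {e : Tm} {γ : FTy} {μid : FTr} {σid : FM} {γ' τ τ1 : FTy} {σ1 : FM}
      {τ2 α : FTy} {μβ : FTr} {σβ : FM} {β : FTy} :
      IdContTypeF γ μid σid γ' →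
      FHasTy ((.arr τ τ1 .empty σ1 τ2 .empty σ1 α) :: Γ) e γ μid σid γ' .empty σβ β →
      FHasTy Γ (.shift e) τ μβ (.fn τ1 τ2) α μβ σβ β

/- The type-level translation ⁺ from DF2 types to 4Dfun types, inserting
   the empty trail type everywhere a trail type is required. -/
mutual
def d2f : D2Ty → FTy
  | .nat => .nat
  | .arr t1 t2 sa a sb b =>
      .arr (d2f t1) (d2f t2) .empty (m2f sa) (d2f a) .empty (m2f sb) (d2f b)
def m2f : M2 → FM
  | .empty => .empty
  | .fn a b => .fn (d2f a) (d2f b)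
end

/-- Typability from DF2 to 4Dfun: if Γ ⊢_DF2 e : τ ⟨σα⟩ α ⟨σβ⟩ β, then
    Γ⁺ ⊢_4Dfun e : τ⁺ ⟨•μ, σα⁺⟩ α⁺ ⟨•μ, σβ⁺⟩ β⁺. -/
theorem df2_to_4dfun {Γ : List D2Ty} {e : Tm} {τ : D2Ty} {σα : M2} {α : D2Ty} {σβ : M2}
    {β : D2Ty} (h : D2HasTy Γ e τ σα α σβ β) :
    FHasTy (Γ.map d2f) e (d2f τ) .empty (m2f σα) (d2f α) .empty (m2f σβ) (d2f β) := by
  induction h with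
  | var h => exact .var (by simp [h])
  | num => exact .num
  | lam _ ih => exact .lam ih
  | app _ _ ih1 ih2 => exact .app ih1 ih2
  | reset _ ih => exact .reset (.idMeta _ _) ih
  | shift _ ih => exact .shift (.idMeta _ _) ih

end DF2FD
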